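/- arXiv:2407.03475 — 2 statements merged into one kernel-verified Lean document; each statement's English description precedes it below -/
import Mathlib

section
/- Let L ≥ 1 be an integer and λ, ρ > 0. Let w : [0, ∞) → ℝ be differentiable with ẇ(t) = λ w(t)^{2−1/L} − (λ/ρ) w(t)³ for all t ≥ 0 and w(0) = ε, where 0 < ε < ρ^{L/(L+1)}. Then w(t) ∈ (0, ρ^{L/(L+1)}) for all t, w is strictly increasing, and lim_{t→∞} w(t) = ρ^{L/(L+1)}. -/
/-!
For `x > 0` the right-hand side factors as `(λ/ρ) x^(2-1/L) (ρ - x^(1+1/L))`, so it is positive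
on `(0, W)`, `W = ρ^(L/(L+1))`, and vanishes at `W`; convexity of `x ↦ x^(1+1/L)` bounds it
by `K (W - x)` there. Hence `w` increases, and by Grönwall `W - w` stays positive, so `(0, W)`
is invariant. The bounded increasing `w` converges, and its limit must be a zero of the field,
which forces it to be `W`.
-/

open Set Filter Topology

theorem Real.rpow_sub_rpow_le_mul_sub {q x y : ℝ} (hq : 1 ≤ q) (hx : 0 ≤ x) (hxy : x ≤ y) :
    y ^ q - x ^ q ≤ q * y ^ (q - 1) * (y - x) := by
  rcases hxy.eq_or_lt with rfl | hlt
  · simp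
  have hslope := (convexOn_rpow hq).slope_le_of_hasDerivAt hx (hx.trans hlt.le) hlt
    (Real.hasDerivAt_rpow_const (Or.inr hq))
  rwa [slope_def_field, div_le_iff₀ (sub_pos.2 hlt)] at hslope

section AutonomousODE

variable {f w w' : ℝ → ℝ}

theorem lt_of_hasDerivAt_le_mul_sub {s b W K : ℝ} (hsb : s ≤ b)
    (hcont : ContinuousOn w (Icc s b)) (hderiv : ∀ t ∈ Ico s b, HasDerivAt w (w' t) t)
    (hbound : ∀ t ∈ Ico s b, w' t ≤ K * (W - w t)) (hs : w s < W) : w b < W := by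
  have hgron := le_gronwallBound_of_liminf_deriv_right_le
    (f := fun t => w t - W) (K := -K) (ε := 0)
    (hcont.sub continuousOn_const)
    (fun t ht _ hr => ((hderiv t ht).hasDerivWithinAt.sub_const W).liminf_right_slope_le hr)
    le_rfl (fun t ht => by linarith [hbound t ht]) b ⟨hsb, le_rfl⟩
  rw [gronwallBound_ε0] at hgron
  have : (w s - W) * Real.exp (-K * (b - s)) < 0 :=
    mul_neg_of_neg_of_pos (by linarith) (Real.exp_pos _)
  linarith

theorem mapsTo_Ioo_of_hasDerivAt {a W K : ℝ} (hf_nonneg : ∀ x ∈ Ioo a W, 0 ≤ f x)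
    (hf_le : ∀ x ∈ Ioo a W, f x ≤ K * (W - x))
    (hode : ∀ t ∈ Ici (0 : ℝ), HasDerivAt w (f (w t)) t) (h0 : w 0 ∈ Ioo a W) :
    MapsTo w (Ici 0) (Ioo a W) := by
  have hcont : ContinuousOn w (Ici 0) := fun t ht => (hode t ht).continuousAt.continuousWithinAt
  by_contra hexit
  obtain ⟨t₀, ht₀, hwt₀⟩ := not_forall₂.mp hexit
  set S := Ici (0 : ℝ) ∩ w ⁻¹' (Ioo a W)ᶜ
  have hS : IsClosed S :=
    hcont.preimage_isClosed_of_isClosed isClosed_Ici isOpen_Ioo.isClosed_compl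
  have hbdd : BddBelow S := ⟨0, fun t ht => ht.1⟩
  have hτ : sInf S ∈ S := hS.csInf_mem ⟨t₀, ht₀, hwt₀⟩ hbdd
  set τ := sInf S
  -- `τ` is the first exit time: before it `w` increases, and Grönwall keeps it below `W`.
  have hτ0 : (0 : ℝ) ≤ τ := hτ.1
  have hbefore : ∀ t ∈ Ico 0 τ, w t ∈ Ioo a W := fun t ht => by
    by_contra h
    exact (csInf_le hbdd ⟨ht.1, h⟩).not_gt ht.2
  have hcontτ : ContinuousOn w (Icc 0 τ) := hcont.mono Icc_subset_Ici_self
  have hmono : w 0 ≤ w τ := by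
    refine monotoneOn_of_hasDerivWithinAt_nonneg (convex_Icc 0 τ) hcontτ
      (fun t ht => (hode t ?_).hasDerivWithinAt) (fun t ht => hf_nonneg _ (hbefore t ?_))
      ⟨le_rfl, hτ0⟩ ⟨hτ0, le_rfl⟩ hτ0
    all_goals rw [interior_Icc] at ht
    exacts [ht.1.le, Ioo_subset_Ico_self ht]
  have hbelow : w τ < W := lt_of_hasDerivAt_le_mul_sub hτ0 hcontτ (fun t ht => hode t ht.1)
    (fun t ht => hf_le _ (hbefore t ht)) h0.2
  exact hτ.2 ⟨h0.1.trans_le hmono, hbelow⟩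

theorem strictMonoOn_of_hasDerivAt_pos {a : ℝ} (hderiv : ∀ t ∈ Ici a, HasDerivAt w (w' t) t)
    (hpos : ∀ t ∈ Ici a, 0 < w' t) : StrictMonoOn w (Ici a) := by
  refine strictMonoOn_of_hasDerivWithinAt_pos (convex_Ici a)
    (fun t ht => (hderiv t ht).continuousAt.continuousWithinAt)
    (fun t ht => (hderiv t ?_).hasDerivWithinAt) (fun t ht => hpos t ?_)
  all_goals exact Ioi_subset_Ici_self (by rwa [interior_Ici] at ht)

theorem MonotoneOn.exists_tendsto_atTop {a M : ℝ} (hmono : MonotoneOn w (Ici a))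
    (hbdd : ∀ t ∈ Ici a, w t ≤ M) : ∃ c, Tendsto w atTop (𝓝 c) := by
  have hmono' : Monotone fun t : Ici a => w t := fun s t hst => hmono s.2 t.2 hst
  refine ⟨_, tendsto_comp_val_Ici_atTop.mp (tendsto_atTop_ciSup hmono' ⟨M, ?_⟩)⟩
  rintro _ ⟨t, rfl⟩
  exact hbdd t t.2

theorem tendsto_atTop_of_hasDerivAt_ge {δ : ℝ} (hδ : 0 < δ)
    (h : ∀ᶠ t in atTop, HasDerivAt w (w' t) t ∧ δ ≤ w' t) : Tendsto w atTop atTop := by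
  obtain ⟨T, hT⟩ := eventually_atTop.mp h
  have hlin : ∀ t ≥ T, w T + δ * (t - T) ≤ w t := by
    intro t ht
    have := (convex_Ici T).mul_sub_le_image_sub_of_le_deriv
      (fun s hs => (hT s hs).1.continuousAt.continuousWithinAt)
      (fun s hs => (hT s (interior_subset hs)).1.differentiableAt.differentiableWithinAt)
      (fun s hs => (hT s (interior_subset hs)).1.deriv ▸ (hT s (interior_subset hs)).2)
      T self_mem_Ici t ht ht
    linarith
  refine tendsto_atTop_mono' atTop (eventually_atTop.mpr ⟨T, hlin⟩) ?_
  exact tendsto_atTop_add_const_left _ _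
    ((tendsto_atTop_add_const_right _ _ tendsto_id).const_mul_atTop hδ)

theorem apply_eq_zero_of_tendsto_of_hasDerivAt {c : ℝ}
    (hode : ∀ᶠ t in atTop, HasDerivAt w (f (w t)) t) (hw : Tendsto w atTop (𝓝 c))
    (hf : ContinuousAt f c) : f c = 0 := by
  have hfw : Tendsto (fun t => f (w t)) atTop (𝓝 (f c)) := hf.tendsto.comp hw
  rcases lt_trichotomy (f c) 0 with hneg | hzero | hpos
  · have : Tendsto (-w) atTop atTop := by
      refine tendsto_atTop_of_hasDerivAt_ge (w' := fun t => -f (w t)) (δ := -f c / 2)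
        (by linarith) ?_
      filter_upwards [hode, hfw.eventually (gt_mem_nhds (by linarith : f c < f c / 2))]
        with t hderiv hlt
      exact ⟨hderiv.neg, by linarith⟩
    exact absurd hw.neg (not_tendsto_nhds_of_tendsto_atTop this _)
  · exact hzero
  · have : Tendsto w atTop atTop := by
      refine tendsto_atTop_of_hasDerivAt_ge (w' := fun t => f (w t)) (δ := f c / 2)
        (by linarith) ?_
      filter_upwards [hode, hfw.eventually (lt_mem_nhds (by linarith : f c / 2 < f c))]
        with t hderiv hlt
      exact ⟨hderiv, hlt.le⟩
    exact absurd hw (not_tendsto_nhds_of_tendsto_atTop this _)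

theorem tendsto_nhds_of_mapsTo_Ioo {a W : ℝ}
    (hode : ∀ t ∈ Ici (0 : ℝ), HasDerivAt w (f (w t)) t) (hmono : MonotoneOn w (Ici 0))
    (hmaps : MapsTo w (Ici 0) (Ioo a W))
    (hf_pos : ∀ x ∈ Ioo a W, 0 < f x) (hf_cont : ∀ x ∈ Ioc a W, ContinuousAt f x) :
    Tendsto w atTop (𝓝 W) := by
  obtain ⟨c, hc⟩ := hmono.exists_tendsto_atTop fun t ht => (hmaps ht).2.le
  have hac : a < c := (hmaps self_mem_Ici).1.trans_le <| ge_of_tendsto hc <|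
    eventually_atTop.mpr ⟨0, fun t ht => hmono self_mem_Ici ht ht⟩
  have hcW : c ≤ W := le_of_tendsto hc <|
    eventually_atTop.mpr ⟨0, fun t ht => (hmaps ht).2.le⟩
  have hfc : f c = 0 := apply_eq_zero_of_tendsto_of_hasDerivAt
    (eventually_atTop.mpr ⟨0, fun t ht => hode t ht⟩) hc (hf_cont c ⟨hac, hcW⟩)
  obtain rfl : c = W := hcW.eq_or_lt.resolve_right fun hlt => (hf_pos c ⟨hac, hlt⟩).ne' hfc
  exact hc

end AutonomousODE

noncomputable def maeField (L : ℕ) (lam rho x : ℝ) : ℝ :=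
  lam * x ^ ((2 : ℝ) - 1 / L) - (lam / rho) * x ^ 3

section MAEField

variable {L : ℕ} {lam rho x : ℝ}

theorem rpow_div_add_one_rpow_one_add_inv (hL : L ≠ 0) (hrho : 0 ≤ rho) :
    (rho ^ ((L : ℝ) / (L + 1))) ^ (1 + 1 / (L : ℝ)) = rho := by
  rw [← Real.rpow_mul hrho]
  convert Real.rpow_one rho using 2
  field_simp

theorem maeField_eq_mul (hrho : rho ≠ 0) (hx : 0 < x) :
    maeField L lam rho x =
      lam / rho * x ^ ((2 : ℝ) - 1 / L) * (rho - x ^ (1 + 1 / (L : ℝ))) := by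
  have hcube : x ^ 3 = x ^ ((2 : ℝ) - 1 / L) * x ^ (1 + 1 / (L : ℝ)) := by
    rw [← Real.rpow_add hx, ← Real.rpow_natCast]
    ring_nf
  rw [maeField, hcube]
  field_simp

theorem maeField_pos (hL : L ≠ 0) (hlam : 0 < lam) (hrho : 0 < rho) (hx : 0 < x)
    (hxW : x < rho ^ ((L : ℝ) / (L + 1))) : 0 < maeField L lam rho x := by
  have hxq : x ^ (1 + 1 / (L : ℝ)) < rho := by
    calc x ^ (1 + 1 / (L : ℝ)) < (rho ^ ((L : ℝ) / (L + 1))) ^ (1 + 1 / (L : ℝ)) :=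
          Real.rpow_lt_rpow hx.le hxW (by positivity)
      _ = rho := rpow_div_add_one_rpow_one_add_inv hL hrho.le
  rw [maeField_eq_mul hrho.ne' hx]
  have := sub_pos.2 hxq
  positivity

theorem exists_maeField_le_mul_sub (hL : L ≠ 0) (hlam : 0 < lam) (hrho : 0 < rho) :
    ∃ K, ∀ x ∈ Ioo 0 (rho ^ ((L : ℝ) / (L + 1))),
      maeField L lam rho x ≤ K * (rho ^ ((L : ℝ) / (L + 1)) - x) := by
  set W := rho ^ ((L : ℝ) / (L + 1))
  set p := (2 : ℝ) - 1 / L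
  set q := 1 + 1 / (L : ℝ)
  have hp : 0 ≤ p := sub_nonneg.2 <|
    (div_le_one_of_le₀ (by exact_mod_cast Nat.one_le_iff_ne_zero.2 hL) (by positivity)).trans
      one_le_two
  have hq : 1 ≤ q := le_add_of_nonneg_right (by positivity)
  have hWq : W ^ q = rho := rpow_div_add_one_rpow_one_add_inv hL hrho.le
  refine ⟨lam / rho * W ^ p * (q * W ^ (q - 1)), fun x ⟨hx0, hxW⟩ => ?_⟩
  have hgap : 0 ≤ W ^ q - x ^ q := sub_nonneg.2 (Real.rpow_le_rpow hx0.le hxW.le (by positivity))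
  have htangent := Real.rpow_sub_rpow_le_mul_sub hq hx0.le hxW.le
  calc maeField L lam rho x = lam / rho * x ^ p * (W ^ q - x ^ q) := by
        rw [maeField_eq_mul hrho.ne' hx0, hWq]
    _ ≤ lam / rho * W ^ p * (q * W ^ (q - 1) * (W - x)) := by gcongr
    _ = lam / rho * W ^ p * (q * W ^ (q - 1)) * (W - x) := by ring

theorem continuousAt_maeField (hx : x ≠ 0) : ContinuousAt (maeField L lam rho) x := by
  unfold maeField
  fun_prop (disch := exact Or.inl hx)

end MAEField

/-- **MAE scalar dynamics: fixed point and monotone convergence.**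
Let `L ≥ 1`, `λ, ρ > 0` and let `w` solve `ẇ = λ w^{2-1/L} - (λ/ρ) w³` on `[0,∞)`
with `w 0 = ε`, `0 < ε < ρ^{L/(L+1)}`.  Then `w t ∈ (0, ρ^{L/(L+1)})` for all
`t ≥ 0`, `w` is strictly increasing on `[0,∞)`, and `w t → ρ^{L/(L+1)}`. -/
theorem mae_fixed_point (L : ℕ) (hL : 1 ≤ L) (lam rho eps : ℝ)
    (hlam : 0 < lam) (hrho : 0 < rho)
    (w : ℝ → ℝ)
    (hode : ∀ t ∈ Ici (0 : ℝ),
      HasDerivAt w (lam * w t ^ ((2 : ℝ) - 1 / L) - (lam / rho) * w t ^ 3) t)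
    (heps : 0 < eps) (heps' : eps < rho ^ ((L : ℝ) / (L + 1))) (hinit : w 0 = eps) :
    (∀ t ∈ Ici (0 : ℝ), w t ∈ Ioo 0 (rho ^ ((L : ℝ) / (L + 1)))) ∧
    StrictMonoOn w (Ici (0 : ℝ)) ∧
    Tendsto w atTop (nhds (rho ^ ((L : ℝ) / (L + 1)))) := by
  have hL0 : L ≠ 0 := Nat.one_le_iff_ne_zero.mp hL
  have hfield_pos : ∀ x ∈ Ioo 0 (rho ^ ((L : ℝ) / (L + 1))), 0 < maeField L lam rho x :=
    fun x hx => maeField_pos hL0 hlam hrho hx.1 hx.2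
  obtain ⟨K, hK⟩ := exists_maeField_le_mul_sub hL0 hlam hrho
  have hmaps : MapsTo w (Ici 0) (Ioo 0 (rho ^ ((L : ℝ) / (L + 1)))) :=
    mapsTo_Ioo_of_hasDerivAt (f := maeField L lam rho) (fun x hx => (hfield_pos x hx).le) hK hode
      (hinit ▸ ⟨heps, heps'⟩)
  have hmono : StrictMonoOn w (Ici 0) :=
    strictMonoOn_of_hasDerivAt_pos hode fun t ht => hfield_pos _ (hmaps ht)
  refine ⟨hmaps, hmono, ?_⟩
  exact tendsto_nhds_of_mapsTo_Ioo (f := maeField L lam rho) hode hmono.monotoneOn hmaps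
    hfield_pos fun x hx => continuousAt_maeField hx.1.ne'
end

section
/- Fix an integer L ≥ 1, reals λ, ρ > 0 and p ∈ (0,1). For each ε ∈ (0, p ρ^L), let w_ε : [0, ∞) → ℝ be the solution of the JEPA dynamics ẇ(t) = λ w(t)^{3−1/L} − (λ/ρ) w(t)³ with w_ε(0) = ε, and let t*(ε) be the unique time with w_ε(t*(ε)) = p ρ^L. Then, as ε → 0⁺, t*(ε) − (1/λ) ∑_{n=1}^{2L−1} L/(n ρ^{2L−n−1} ε^{n/L}) = O(log(1/ε)). -/
/-!
The ODE `ẇ = f(w)` is separable. While a trajectory stays in `(0, ρ^L)`, where `f > 0`, the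
quantity `F(w(t)) - t` is constant for any primitive `F` of `1/f`, so `t*(ε) = F(pρ^L) - F(ε)`.
Up to `t*(ε)` the trajectory indeed stays in `[ε, pρ^L]`: it cannot cross the level `ε` downwards
because `f(ε) > 0`, and it cannot reach `pρ^L` before the unique time `t*(ε)`.
The substitution `u = w^{1/L}` turns `dw / f(w)` into `(L/λ) ρ du / (u^{2L} (ρ - u))`, whose
partial fraction expansion gives `F` in closed form: the negative powers of `u = ε^{1/L}` are
exactly the sum in the statement, and what is left is `-log ε / (λ ρ^{2L-1})` plus a term that stays
bounded as `ε → 0⁺`.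
-/

open Set Filter Finset Real Asymptotics Topology

theorem le_of_hasDerivAt_comp_of_pos {f w : ℝ → ℝ} {a b c : ℝ}
    (hw : ∀ t ∈ Icc a b, HasDerivAt w (f (w t)) t) (hc : 0 < f c) (ha : c ≤ w a) :
    ∀ t ∈ Icc a b, c ≤ w t :=
  image_le_of_deriv_right_lt_deriv_boundary' continuousOn_const
    (fun _ _ => hasDerivWithinAt_const _ _ c) ha
    (fun t ht => (hw t ht).continuousAt.continuousWithinAt)
    (fun t ht => (hw t (Ico_subset_Icc_self ht)).hasDerivWithinAt)
    (fun _ _ hct => hct ▸ hc)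

theorem lt_of_lt_unique_hit {w : ℝ → ℝ} {a t T y : ℝ} (hw : ContinuousOn w (Icc a t))
    (hat : a ≤ t) (ha : w a < y) (huniq : ∀ s ∈ Icc a t, w s = y → s = T) (htT : t < T) :
    w t < y := by
  by_contra! hy
  obtain ⟨s, hs, hws⟩ := intermediate_value_Icc hat hw ⟨ha.le, hy⟩
  exact htT.not_ge (huniq s hs hws ▸ hs.2)

theorem sub_eq_sub_of_hasDerivAt_inv {f F w : ℝ → ℝ} {s : Set ℝ} {a b : ℝ} (hab : a ≤ b)
    (hw : ∀ t ∈ Icc a b, HasDerivAt w (f (w t)) t) (hws : ∀ t ∈ Icc a b, w t ∈ s)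
    (hF : ∀ x ∈ s, HasDerivAt F (f x)⁻¹ x) (hf : ∀ x ∈ s, f x ≠ 0) :
    b - a = F (w b) - F (w a) := by
  have hderiv : ∀ t ∈ Icc a b, HasDerivAt (fun t => F (w t) - t) 0 t := fun t ht => by
    have := ((hF _ (hws t ht)).comp t (hw t ht)).sub (hasDerivAt_id t)
    rwa [inv_mul_cancel₀ (hf _ (hws t ht)), sub_self] at this
  have := constant_of_has_deriv_right_zero
    (fun t ht => (hderiv t ht).continuousAt.continuousWithinAt)
    (fun t ht => (hderiv t (Ico_subset_Icc_self ht)).hasDerivWithinAt) b (right_mem_Icc.2 hab)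
  linarith

theorem isBigO_log_inv_of_tendsto {g : ℝ → ℝ} {c : ℝ} (hg : Tendsto g (𝓝[>] 0) (𝓝 c)) :
    g =O[𝓝[>] 0] fun x => log (1 / x) := by
  refine (hg.isBigO_one ℝ).trans ((isLittleO_one_left_iff ℝ).2 ?_).isBigO
  simp only [one_div]
  exact tendsto_norm_atTop_atTop.comp (tendsto_log_atTop.comp tendsto_inv_nhdsGT_zero)

noncomputable def primitiveInvPowMulSub (N : ℕ) (rho u : ℝ) : ℝ :=
  -(∑ m ∈ Finset.Icc 1 N, u ^ (-(m : ℤ)) / (m * rho ^ (N - m)))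
    + (log u - log (rho - u)) / rho ^ N

theorem div_pow_succ_mul_sub_eq_sum_add (N : ℕ) {rho u : ℝ} (hu : u ≠ 0) (hrho : rho ≠ 0)
    (hur : rho - u ≠ 0) :
    rho / (u ^ (N + 1) * (rho - u))
      = ∑ m ∈ Finset.Icc 1 N, u ^ (-(m : ℤ) - 1) / rho ^ (N - m)
        + (1 / u + 1 / (rho - u)) / rho ^ N := by
  have hterm : ∀ m ∈ Finset.Icc 1 N, u ^ (-(m : ℤ) - 1) / rho ^ (N - m)
      = rho ^ m * u ^ (N - m) / (u ^ (N + 1) * rho ^ N) := by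
    intro m hm
    have hmN : m ≤ N := (Finset.mem_Icc.1 hm).2
    have hu' : u ^ (N + 1) = u ^ (m + 1) * u ^ (N - m) := by rw [← pow_add]; congr 1; omega
    have hrho' : rho ^ N = rho ^ m * rho ^ (N - m) := by rw [← pow_add]; congr 1; omega
    rw [hu', hrho', zpow_sub₀ hu, zpow_neg, zpow_natCast, zpow_one]
    field_simp
    ring
  -- the sum is a truncated geometric sum, hence telescopes against `rho - u`
  have hgeom : (∑ m ∈ Finset.Icc 1 N, rho ^ m * u ^ (N - m)) * (rho - u)
      = rho ^ (N + 1) - rho * u ^ N := by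
    have h := geom_sum₂_mul rho u (N + 1)
    rw [Finset.sum_range_succ'] at h
    rw [← Finset.Ico_add_one_right_eq_Icc, Finset.sum_Ico_eq_sum_range, Nat.add_sub_cancel]
    simp only [Nat.add_sub_cancel, add_comm 1, pow_zero, one_mul, Nat.sub_zero] at h ⊢
    linear_combination h
  rw [Finset.sum_congr rfl hterm, ← Finset.sum_div]
  field_simp
  linear_combination (-u) * hgeom

theorem hasDerivAt_primitiveInvPowMulSub (N : ℕ) {rho u : ℝ} (hu : 0 < u) (hur : u < rho) :
    HasDerivAt (primitiveInvPowMulSub N rho) (rho / (u ^ (N + 1) * (rho - u))) u := by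
  have hrho : rho ≠ 0 := (hu.trans hur).ne'
  have hsub : rho - u ≠ 0 := (sub_pos.2 hur).ne'
  have hsum : HasDerivAt (fun u : ℝ => ∑ m ∈ Finset.Icc 1 N, u ^ (-(m : ℤ)) / (m * rho ^ (N - m)))
      (∑ m ∈ Finset.Icc 1 N, -(u ^ (-(m : ℤ) - 1) / rho ^ (N - m))) u := by
    refine HasDerivAt.fun_sum fun m hm => ?_
    have hm0 : (m : ℝ) ≠ 0 := Nat.cast_ne_zero.2 (Nat.one_le_iff_ne_zero.1 (Finset.mem_Icc.1 hm).1)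
    refine ((hasDerivAt_zpow (-(m : ℤ)) u (Or.inl hu.ne')).div_const _).congr_deriv ?_
    push_cast
    field_simp
  have hlog : HasDerivAt (fun u : ℝ => (log u - log (rho - u)) / rho ^ N)
      ((1 / u + 1 / (rho - u)) / rho ^ N) u := by
    have h := ((hasDerivAt_log hu.ne').sub ((hasDerivAt_id u).const_sub rho |>.log hsub)).div_const
      (rho ^ N)
    refine h.congr_deriv ?_
    simp only [id, one_div]
    ring
  refine (hsum.neg.add hlog).congr_deriv ?_
  rw [div_pow_succ_mul_sub_eq_sum_add N hu.ne' hrho hsub, Finset.sum_neg_distrib, neg_neg]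

noncomputable def jepaField (L : ℕ) (lam rho x : ℝ) : ℝ :=
  lam * x ^ ((3 : ℝ) - 1 / L) - (lam / rho) * x ^ 3

noncomputable def jepaPrimitive (L : ℕ) (lam rho x : ℝ) : ℝ :=
  (L / lam) * primitiveInvPowMulSub (2 * L - 1) rho (x ^ ((1 : ℝ) / L))

section Jepa

variable {L : ℕ} {lam rho x : ℝ}

theorem rpow_one_div_lt_of_lt_pow (hL : L ≠ 0) (hrho : 0 ≤ rho) (hx : 0 ≤ x)
    (h : x < rho ^ L) : x ^ ((1 : ℝ) / L) < rho := by
  rwa [one_div, rpow_inv_lt_iff_of_pos hx hrho (by positivity), rpow_natCast]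

theorem jepaField_eq_mul (hrho : rho ≠ 0) (hx : 0 < x) :
    jepaField L lam rho x = (lam / rho) * x ^ ((3 : ℝ) - 1 / L) * (rho - x ^ ((1 : ℝ) / L)) := by
  have h3 : x ^ ((3 : ℝ) - 1 / L) * x ^ ((1 : ℝ) / L) = x ^ 3 := by
    rw [← rpow_add hx, sub_add_cancel, ← rpow_natCast]
    norm_num
  rw [jepaField, ← h3]
  field_simp

theorem jepaField_pos (hL : L ≠ 0) (hlam : 0 < lam) (hrho : 0 < rho) (hx : 0 < x)
    (hxr : x < rho ^ L) : 0 < jepaField L lam rho x := by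
  have hroot := rpow_one_div_lt_of_lt_pow hL hrho.le hx.le hxr
  rw [jepaField_eq_mul hrho.ne' hx]
  have := rpow_pos_of_pos hx ((3 : ℝ) - 1 / L)
  have := sub_pos.2 hroot
  positivity

theorem hasDerivAt_jepaPrimitive (hL : L ≠ 0) (hlam : lam ≠ 0) (hrho : 0 < rho) (hx : 0 < x)
    (hxr : x < rho ^ L) :
    HasDerivAt (jepaPrimitive L lam rho) (jepaField L lam rho x)⁻¹ x := by
  set u := x ^ ((1 : ℝ) / L) with hu_def
  have hu : 0 < u := rpow_pos_of_pos hx _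
  have hur : 0 < rho - u := sub_pos.2 (rpow_one_div_lt_of_lt_pow hL hrho.le hx.le hxr)
  have hG := (hasDerivAt_primitiveInvPowMulSub (2 * L - 1) hu (sub_pos.1 hur)).comp x
    (hasDerivAt_rpow_const (p := (1 : ℝ) / L) (Or.inl hx.ne'))
  refine (hG.const_mul ((L : ℝ) / lam)).congr_deriv ?_
  have hu2L : u ^ (2 * L - 1 + 1) = x ^ 2 := by
    rw [Nat.sub_add_cancel (by omega), hu_def, ← rpow_natCast, ← rpow_mul hx.le, ← rpow_natCast]
    congr 1
    push_cast
    field_simp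
  have hpow : x ^ ((1 : ℝ) / L - 1) * x ^ ((3 : ℝ) - 1 / L) = x ^ 2 := by
    rw [← rpow_add hx, ← rpow_natCast]
    norm_num
  have hB := rpow_pos_of_pos hx ((3 : ℝ) - 1 / L)
  rw [jepaField_eq_mul hrho.ne' hx, ← hu_def, hu2L]
  generalize x ^ ((1 : ℝ) / L - 1) = A at hpow ⊢
  generalize x ^ ((3 : ℝ) - 1 / L) = B at hpow hB ⊢
  field_simp
  linear_combination hpow

theorem jepaPrimitive_add_sum (hL : L ≠ 0) (hlam : lam ≠ 0) (hrho : rho ≠ 0) (hx : 0 < x) :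
    jepaPrimitive L lam rho x + (1 / lam) * ∑ n ∈ Finset.Icc 1 (2 * L - 1),
        (L : ℝ) / (n * rho ^ (2 * L - n - 1) * x ^ ((n : ℝ) / L))
      = (log x - L * log (rho - x ^ ((1 : ℝ) / L))) / (lam * rho ^ (2 * L - 1)) := by
  have hterm : ∀ n ∈ Finset.Icc 1 (2 * L - 1),
      (L : ℝ) / (n * rho ^ (2 * L - n - 1) * x ^ ((n : ℝ) / L))
        = L * ((x ^ ((1 : ℝ) / L)) ^ (-(n : ℤ)) / (n * rho ^ (2 * L - 1 - n))) := by
    intro n _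
    rw [zpow_neg, zpow_natCast, ← rpow_natCast (x ^ ((1 : ℝ) / L)) n, ← rpow_mul hx.le,
      one_div_mul_eq_div, show 2 * L - n - 1 = 2 * L - 1 - n by omega]
    ring
  rw [jepaPrimitive, primitiveInvPowMulSub, Finset.sum_congr rfl hterm, ← Finset.mul_sum,
    log_rpow hx]
  field_simp
  ring

theorem hitting_time_eq_jepaPrimitive_sub (hL : L ≠ 0) (hlam : 0 < lam) (hrho : 0 < rho)
    {w : ℝ → ℝ} {eps y T : ℝ} (heps : 0 < eps) (hepsy : eps < y) (hy : y < rho ^ L)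
    (hw0 : w 0 = eps) (hw : ∀ t ∈ Ici (0 : ℝ), HasDerivAt w (jepaField L lam rho (w t)) t)
    (hT : 0 ≤ T) (hwT : w T = y) (huniq : ∀ s ∈ Ici (0 : ℝ), w s = y → s = T) :
    T = jepaPrimitive L lam rho y - jepaPrimitive L lam rho eps := by
  have hwIcc : ∀ t ∈ Icc 0 T, HasDerivAt w (jepaField L lam rho (w t)) t :=
    fun t ht => hw t ht.1
  have hlower : ∀ t ∈ Icc 0 T, eps ≤ w t :=
    le_of_hasDerivAt_comp_of_pos hwIcc (jepaField_pos hL hlam hrho heps (hepsy.trans hy)) hw0.ge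
  have hupper : ∀ t ∈ Icc 0 T, w t ≤ y := by
    rintro t ⟨ht0, htT⟩
    rcases htT.lt_or_eq with htT | rfl
    · exact (lt_of_lt_unique_hit (fun s hs => (hw s hs.1).continuousAt.continuousWithinAt) ht0
        (hw0 ▸ hepsy) (fun s hs => huniq s hs.1) htT).le
    · exact hwT.le
  have h := sub_eq_sub_of_hasDerivAt_inv hT hwIcc (s := Ioo 0 (rho ^ L))
    (fun t ht => ⟨heps.trans_le (hlower t ht), (hupper t ht).trans_lt hy⟩)
    (fun _ hx => hasDerivAt_jepaPrimitive hL hlam.ne' hrho hx.1 hx.2)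
    (fun _ hx => (jepaField_pos hL hlam hrho hx.1 hx.2).ne')
  rwa [sub_zero, hwT, hw0] at h

end Jepa

/-- **JEPA critical time.**
Fix `L ≥ 1`, `λ, ρ > 0`, `p ∈ (0,1)`.  For each `ε ∈ (0, p ρ^L)` let `w ε` be
the solution of the JEPA dynamics `ẇ = λ w^{3-1/L} - (λ/ρ) w³` with `w ε 0 = ε`,
and let `tstar ε ≥ 0` be the unique time with `w ε (tstar ε) = p ρ^L`.  Then, as
`ε → 0⁺`,
`tstar ε - (1/λ) ∑_{n=1}^{2L-1} L/(n ρ^{2L-n-1} ε^{n/L}) = O(log (1/ε))`. -/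
theorem jepa_critical_time (L : ℕ) (hL : 1 ≤ L) (lam rho p : ℝ)
    (hlam : 0 < lam) (hrho : 0 < rho) (hp : p ∈ Ioo (0 : ℝ) 1)
    (w : ℝ → ℝ → ℝ) (tstar : ℝ → ℝ)
    (hinit : ∀ eps ∈ Ioo (0 : ℝ) (p * rho ^ L), w eps 0 = eps)
    (hode : ∀ eps ∈ Ioo (0 : ℝ) (p * rho ^ L), ∀ t ∈ Ici (0 : ℝ),
      HasDerivAt (w eps)
        (lam * w eps t ^ ((3 : ℝ) - 1 / L) - (lam / rho) * w eps t ^ 3) t)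
    (htstar_nonneg : ∀ eps ∈ Ioo (0 : ℝ) (p * rho ^ L), 0 ≤ tstar eps)
    (htstar : ∀ eps ∈ Ioo (0 : ℝ) (p * rho ^ L), w eps (tstar eps) = p * rho ^ L)
    (htstar_unique : ∀ eps ∈ Ioo (0 : ℝ) (p * rho ^ L), ∀ s ∈ Ici (0 : ℝ),
      w eps s = p * rho ^ L → s = tstar eps) :
    (fun eps : ℝ => tstar eps
        - (1 / lam) * ∑ n ∈ Finset.Icc 1 (2 * L - 1),
            (L : ℝ) / (n * rho ^ (2 * L - n - 1) * eps ^ ((n : ℝ) / L)))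
      =O[nhdsWithin 0 (Ioi (0 : ℝ))] (fun eps => Real.log (1 / eps)) := by
  have hL0 : L ≠ 0 := by omega
  have hlevel : 0 < p * rho ^ L := mul_pos hp.1 (pow_pos hrho L)
  have hlevel_lt : p * rho ^ L < rho ^ L := mul_lt_of_lt_one_left (pow_pos hrho L) hp.2
  set C := jepaPrimitive L lam rho (p * rho ^ L)
  set c := lam * rho ^ (2 * L - 1)
  have hbounded : Tendsto (fun eps : ℝ => C + L * log (rho - eps ^ ((1 : ℝ) / L)) / c)
      (𝓝[>] 0) (𝓝 (C + L * log (rho - 0) / c)) := by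
    have hroot : Tendsto (fun eps : ℝ => eps ^ ((1 : ℝ) / L)) (𝓝[>] 0) (𝓝 0) :=
      ((continuous_rpow_const (by positivity)).tendsto' 0 0
        (zero_rpow (by positivity))).mono_left nhdsWithin_le_nhds
    exact ((((tendsto_const_nhds.sub hroot).log (by simpa using hrho.ne')).const_mul _).div_const
      _).const_add _
  have hsplit : (fun eps : ℝ => tstar eps
        - (1 / lam) * ∑ n ∈ Finset.Icc 1 (2 * L - 1),
            (L : ℝ) / (n * rho ^ (2 * L - n - 1) * eps ^ ((n : ℝ) / L)))
      =ᶠ[𝓝[>] 0] fun eps => (C + L * log (rho - eps ^ ((1 : ℝ) / L)) / c)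
        + c⁻¹ * log (1 / eps) := by
    filter_upwards [Ioo_mem_nhdsGT hlevel] with eps heps
    have hformula := jepaPrimitive_add_sum hL0 hlam.ne' hrho.ne' heps.1 (L := L)
    rw [hitting_time_eq_jepaPrimitive_sub hL0 hlam hrho heps.1 heps.2 hlevel_lt (hinit eps heps)
      (hode eps heps) (htstar_nonneg eps heps) (htstar eps heps) (htstar_unique eps heps),
      one_div eps, log_inv]
    linear_combination -hformula
  exact ((isBigO_log_inv_of_tendsto hbounded).add
    ((isBigO_refl _ _).const_mul_left _)).congr' hsplit.symm EventuallyEq.rfl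
end
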